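/- Let b, n be natural numbers with n ≥ 3 and (n − b − 2)(n − b − 6) ≤ 3b. Consider an election with at most n candidates, and let x be a non-dirty candidate with respect to threshold 5/6. Let r be a 3-wise median of the election of the form A > x > B (A the set of candidates ranked before x in r, B the set ranked after x) such that |B| ≥ b and every candidate z with z ≥_{5/6} x belongs to A. Then for every candidate y ≠ x with x ≥_{5/6} y, x is ranked before y in r. -/

import Mathlib

open Finset

/-- A ranking (strict total order) of the finite candidate set `C`, encoded as a
bijection with `Fin (Fintype.card C)`; position `0` is the top of the ranking. -/
abbrev Ranking (C : Type*) [Fintype C] := C ≃ Fin (Fintype.card C)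

section Defs

variable {C : Type*} [Fintype C] [DecidableEq C]

/-- `x` is ranked (strictly) before `y` in the ranking `π`. -/
def Before (π : Ranking C) (x y : C) : Prop := π x < π y

instance (π : Ranking C) (x y : C) : Decidable (Before π x y) :=
  inferInstanceAs (Decidable (π x < π y))

instance : DecidableEq (Ranking C) := fun a b =>
  decidable_of_iff (∀ i, a i = b i) Equiv.ext_iff.symm

/-- The top-ranked element of `S ⊆ C` according to `π` (`⊤` if `S = ∅`). -/
def topS (π : Ranking C) (S : Finset C) : WithTop C :=
  (S.image π).min.map (fun i => π.symm i)

/-- The `k`-wise Kendall-tau distance between two rankings: the number of subsets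
`S ⊆ C` with `|S| ≤ k` on whose top element the two rankings disagree (subsets of
size at most one never contribute). -/
def kDist (k : ℕ) (π σ : Ranking C) : ℕ :=
  ((Finset.univ : Finset C).powerset.filter
    (fun S => S.card ≤ k ∧ topS π S ≠ topS σ S)).card

/-- The `k`-wise Kendall-tau distance from a ranking to a voting profile. -/
def kDistV (k : ℕ) (π : Ranking C) (V : Multiset (Ranking C)) : ℕ :=
  (V.map (fun σ => kDist k π σ)).sum

/-- `π` is a `k`-wise median (for `k = 2`: a Kemeny ranking) of the profile `V`. -/
def IsKMedian (k : ℕ) (V : Multiset (Ranking C)) (π : Ranking C) : Prop :=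
  ∀ σ : Ranking C, kDistV k π V ≤ kDistV k σ V

/-- The number of votes of `V` in which `x` is ranked before `y`. -/
def votesBefore (V : Multiset (Ranking C)) (x y : C) : ℕ :=
  Multiset.card (V.filter (fun v => Before v x y))

/-- `x ≥ₛ y` : `x` is ranked before `y` in at least `s·|V|` of the votes. -/
def AtLeastRatio (V : Multiset (Ranking C)) (s : ℝ) (x y : C) : Prop :=
  s * (Multiset.card V : ℝ) ≤ (votesBefore V x y : ℝ)

/-- `x >ₛ y` : `x` is ranked before `y` in more than `s·|V|` of the votes. -/
def MoreThanRatio (V : Multiset (Ranking C)) (s : ℝ) (x y : C) : Prop :=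
  s * (Multiset.card V : ℝ) < (votesBefore V x y : ℝ)

noncomputable instance (V : Multiset (Ranking C)) (s : ℝ) (x y : C) :
    Decidable (AtLeastRatio V s x y) :=
  inferInstanceAs (Decidable (s * (Multiset.card V : ℝ) ≤ (votesBefore V x y : ℝ)))

/-- `x` is a non-dirty candidate w.r.t. threshold `s`. -/
def NonDirty (V : Multiset (Ranking C)) (s : ℝ) (x : C) : Prop :=
  ∀ y : C, y ≠ x → AtLeastRatio V s x y ∨ AtLeastRatio V s y x

/-- `x` is ranked first (is the winner) in the ranking `π`. -/
def RankedFirst (π : Ranking C) (x : C) : Prop :=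
  ∀ y : C, y ≠ x → Before π x y

instance (π : Ranking C) (x : C) : Decidable (RankedFirst π x) :=
  inferInstanceAs (Decidable (∀ y : C, y ≠ x → Before π x y))

end Defs

/-!
Suppose some `y₀` with `x ≥_{5/6} y₀` is ranked above `x` in `r`, and let `y` be the lowest
such candidate. By non-dirtiness every `u` strictly between `y` and `x` satisfies `u ≥_{5/6} x`,
and by the hypothesis on `A` every `e ∈ B` satisfies `x ≥_{5/6} e`. Move `y` to just below `x`.
The only sets `S` with `|S| ≤ 3` whose top changes contain `y` and otherwise lie below `y` in
`r`. Counting votes, the number of votes disagreeing with the top of `S` drops by at least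
`4|V|/6` on `{y, x}`, `2|V|/6` on `{y, u}` and `{y, x, u}`, `3|V|/6` on `{y, x, e}`, and `0` on
`{y, u, e}`, while it grows by at most `2|V|/6` on `{y, u, u'}`. With `k` candidates between `y`
and `x`, the 3-wise distance to `V` therefore drops by at least
`|V| (4 + 4k + 3|B| - k(k-1)) / 6`, which is positive since `k + |B| + 2 ≤ n`, `b ≤ |B|` and
`(n-b-2)(n-b-6) ≤ 3b`. This contradicts the minimality of `r`.
-/

section

variable {C : Type*} [Fintype C]

lemma Before.trans {π : Ranking C} {a b c : C} (hab : Before π a b) (hbc : Before π b c) :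
    Before π a c :=
  lt_trans hab hbc

lemma Before.ne {π : Ranking C} {a b : C} (h : Before π a b) : a ≠ b := fun hab =>
  lt_irrefl _ (hab ▸ h)

lemma before_of_not_before {π : Ranking C} {a b : C} (hab : a ≠ b) (h : ¬ Before π a b) :
    Before π b a :=
  lt_of_le_of_ne (not_lt.mp h) fun he => hab (π.injective he).symm

lemma topS_eq_of_forall_le {π : Ranking C} {S : Finset C} {m : C} (hm : m ∈ S)
    (h : ∀ z ∈ S, π m ≤ π z) : topS π S = m := by
  have hmin : (S.image π).min = (π m : WithTop (Fin (Fintype.card C))) :=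
    le_antisymm (Finset.min_le (mem_image_of_mem π hm))
      (Finset.le_min fun _ hi => by
        obtain ⟨z, hz, rfl⟩ := mem_image.mp hi
        exact_mod_cast h z hz)
  simp [topS, hmin]

lemma topS_eq_iff {π : Ranking C} {S : Finset C} {m : C} :
    topS π S = m ↔ m ∈ S ∧ ∀ z ∈ S, z ≠ m → Before π m z := by
  constructor
  · intro h
    obtain ⟨m₀, hm₀, hmin⟩ := S.exists_min_image π (by
      by_contra hS
      rw [not_nonempty_iff_eq_empty.mp hS] at h
      exact WithTop.top_ne_coe h)
    obtain rfl : m₀ = m := by exact_mod_cast (topS_eq_of_forall_le hm₀ hmin).symm.trans h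
    exact ⟨hm₀, fun z hz hzm =>
      lt_of_le_of_ne (hmin z hz) fun he => hzm (π.injective he).symm⟩
  · rintro ⟨hm, h⟩
    refine topS_eq_of_forall_le hm fun z hz => ?_
    rcases eq_or_ne z m with rfl | hzm
    · exact le_rfl
    · exact (h z hz hzm).le

lemma topS_eq_of_before_imp {π π' : Ranking C} {S : Finset C} {m : C} (h : topS π S = m)
    (hbefore : ∀ z ∈ S, z ≠ m → Before π m z → Before π' m z) : topS π' S = m := by
  obtain ⟨hm, hmin⟩ := topS_eq_iff.mp h
  exact topS_eq_iff.mpr ⟨hm, fun z hz hzm => hbefore z hz hzm (hmin z hz hzm)⟩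

lemma card_filter_add_card_filter_le {α : Type*} (V : Multiset α) (p q : α → Prop)
    [DecidablePred p] [DecidablePred q] :
    Multiset.card (V.filter p) + Multiset.card (V.filter q) ≤
      Multiset.card V + Multiset.card (V.filter fun a => p a ∧ q a) := by
  rw [← Multiset.card_add, Multiset.filter_add_filter, Multiset.card_add]
  exact Nat.add_le_add_right (Multiset.card_le_card (Multiset.filter_le (fun a => p a ∨ q a) V)) _

lemma votesBefore_add_votesBefore_swap (V : Multiset (Ranking C)) {a c : C} (h : a ≠ c) :
    votesBefore V a c + votesBefore V c a = Multiset.card V := by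
  rw [votesBefore, votesBefore, ← Multiset.card_add]
  convert congrArg Multiset.card (Multiset.filter_add_not (fun σ => Before σ a c) V) using 3
  refine Multiset.filter_congr fun σ _ => ?_
  simp only [Before, not_lt]
  exact ⟨le_of_lt, fun hle => lt_of_le_of_ne hle fun he => h (σ.injective he).symm⟩

lemma votesBefore_add_votesBefore_le (V : Multiset (Ranking C)) (a c e : C) :
    votesBefore V a c + votesBefore V c e ≤ votesBefore V a e + Multiset.card V := by
  have hboth := card_filter_add_card_filter_le V (Before · a c) (Before · c e)
  have htrans : Multiset.card (V.filter fun σ => Before σ a c ∧ Before σ c e) ≤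
      votesBefore V a e :=
    Multiset.card_le_card <| Multiset.monotone_filter_right V fun _ h => h.1.trans h.2
  unfold votesBefore at *
  omega

lemma AtLeastRatio.five_mul_card_le {V : Multiset (Ranking C)} {a b : C}
    (h : AtLeastRatio V (5 / 6) a b) : 5 * Multiset.card V ≤ 6 * votesBefore V a b := by
  unfold AtLeastRatio at h
  exact_mod_cast (by linarith : (5 : ℝ) * Multiset.card V ≤ 6 * votesBefore V a b)

lemma three_mul_votesBefore_le_card {V : Multiset (Ranking C)} {x y u : C}
    (hxy : AtLeastRatio V (5 / 6) x y) (hux : AtLeastRatio V (5 / 6) u x) (huy : u ≠ y) :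
    3 * votesBefore V y u ≤ Multiset.card V := by
  have := hxy.five_mul_card_le
  have := hux.five_mul_card_le
  have := votesBefore_add_votesBefore_le V u x y
  have := votesBefore_add_votesBefore_swap V huy
  omega

def below (r : Ranking C) (x : C) : Finset C := univ.filter (Before r x ·)

def between (r : Ranking C) (y x : C) : Finset C :=
  univ.filter fun z => Before r y z ∧ Before r z x

lemma notMem_below_self {r : Ranking C} {x : C} : x ∉ below r x := fun h =>
  lt_irrefl _ (mem_filter.mp h).2

lemma disjoint_between_below {r : Ranking C} {x y : C} : Disjoint (between r y x) (below r x) :=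
  disjoint_left.mpr fun _ hz hz' =>
    lt_asymm (mem_filter.mp hz).2.2 (mem_filter.mp hz').2

variable [DecidableEq C]

def votesTop (V : Multiset (Ranking C)) (S : Finset C) (c : C) : ℕ :=
  Multiset.card (V.filter fun σ => topS σ S = c)

def disagreements (V : Multiset (Ranking C)) (π : Ranking C) (S : Finset C) : ℕ :=
  Multiset.card (V.filter fun σ => topS π S ≠ topS σ S)

lemma kDistV_eq_sum_disagreements (k : ℕ) (π : Ranking C) (V : Multiset (Ranking C)) :
    kDistV k π V = ∑ S ∈ univ.powerset.filter (·.card ≤ k), disagreements V π S := by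
  induction V using Multiset.induction with
  | empty => simp [kDistV, disagreements]
  | cons σ V ih =>
    have hσ : kDist k π σ = ∑ S ∈ univ.powerset.filter (·.card ≤ k),
        if topS π S ≠ topS σ S then 1 else 0 := by
      rw [kDist, ← filter_filter, card_filter]
    simp only [kDistV, Multiset.map_cons, Multiset.sum_cons] at ih ⊢
    simp only [disagreements, Multiset.filter_cons, Multiset.card_add, ih, hσ,
      ← sum_add_distrib]
    refine sum_congr rfl fun S _ => ?_
    split_ifs <;> simp

lemma votesTop_le_card (V : Multiset (Ranking C)) (S : Finset C) (c : C) :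
    votesTop V S c ≤ Multiset.card V :=
  Multiset.card_le_card (Multiset.filter_le _ V)

lemma disagreements_eq (V : Multiset (Ranking C)) {π : Ranking C} {S : Finset C} {m : C}
    (h : topS π S = m) : disagreements V π S = Multiset.card V - votesTop V S m := by
  have hsplit := congrArg Multiset.card (Multiset.filter_add_not (fun σ => topS σ S = m) V)
  rw [Multiset.card_add] at hsplit
  have : disagreements V π S = Multiset.card (V.filter fun σ => ¬ topS σ S = m) := by
    simp only [disagreements, h, ne_comm]
  rw [votesTop]
  omega

lemma votesTop_le_votesBefore (V : Multiset (Ranking C)) {S : Finset C} {c d : C}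
    (hd : d ∈ S) (hdc : d ≠ c) : votesTop V S c ≤ votesBefore V c d :=
  Multiset.card_le_card <| Multiset.monotone_filter_right V fun _ h =>
    (topS_eq_iff.mp h).2 d hd hdc

lemma votesBefore_le_votesTop (V : Multiset (Ranking C)) {S : Finset C} {a b : C}
    (ha : a ∈ S) (hS : S ⊆ {a, b}) : votesBefore V a b ≤ votesTop V S a :=
  Multiset.card_le_card <| Multiset.monotone_filter_right V fun σ h =>
    topS_eq_iff.mpr ⟨ha, fun z hz hza => by
      rcases mem_insert.mp (hS hz) with rfl | hzb
      · exact absurd rfl hza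
      · rwa [mem_singleton.mp hzb]⟩

lemma votesBefore_add_votesBefore_le_votesTop (V : Multiset (Ranking C)) {S : Finset C}
    {a b c : C} (ha : a ∈ S) (hS : S ⊆ {a, b, c}) :
    votesBefore V a b + votesBefore V a c ≤ Multiset.card V + votesTop V S a := by
  refine (card_filter_add_card_filter_le V _ _).trans (Nat.add_le_add_left ?_ _)
  refine Multiset.card_le_card <| Multiset.monotone_filter_right V fun σ h =>
    topS_eq_iff.mpr ⟨ha, fun z hz hza => ?_⟩
  rcases mem_insert.mp (hS hz) with rfl | hz
  · exact absurd rfl hza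
  rcases mem_insert.mp hz with rfl | hz
  · exact h.1
  · rw [mem_singleton.mp hz]; exact h.2

lemma below_eq_insert {r : Ranking C} {x y : C} (hyx : Before r y x) :
    below r y = insert x (between r y x ∪ below r x) := by
  ext z
  simp only [below, between, mem_insert, mem_union, mem_filter, mem_univ, true_and]
  constructor
  · intro hyz
    rcases lt_trichotomy (r z) (r x) with h | h | h
    · exact Or.inr (Or.inl ⟨hyz, h⟩)
    · exact Or.inl (r.injective h)
    · exact Or.inr (Or.inr h)
  · rintro (rfl | ⟨hyz, -⟩ | hxz)
    exacts [hyx, hyz, hyx.trans hxz]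

lemma notMem_between_union_below {r : Ranking C} {x y : C} : x ∉ between r y x ∪ below r x := by
  simp only [mem_union, between, below, mem_filter, mem_univ, true_and, not_or]
  exact ⟨fun h => lt_irrefl _ h.2, lt_irrefl _⟩

section Move

variable (r : Ranking C) (y : C) (p : Fin (Fintype.card C))

def movedPos (z : C) : Fin (Fintype.card C) :=
  ⟨if z = y then p
    else if (r y : ℕ) < r z ∧ (r z : ℕ) ≤ p then (r z : ℕ) - 1
    else if (p : ℕ) ≤ r z ∧ (r z : ℕ) < r y then (r z : ℕ) + 1
    else r z, by have := (r z).isLt; have := (r y).isLt; split_ifs <;> omega⟩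

lemma movedPos_val_of_ne {z : C} (hz : z ≠ y) : (movedPos r y p z : ℕ) =
    if (r y : ℕ) < r z ∧ (r z : ℕ) ≤ p then (r z : ℕ) - 1
    else if (p : ℕ) ≤ r z ∧ (r z : ℕ) < r y then (r z : ℕ) + 1
    else r z := by
  simp [movedPos, hz]

lemma movedPos_injective : Function.Injective (movedPos r y p) := by
  have hval : ∀ {z z' : C}, z ≠ z' → (r z : ℕ) ≠ r z' :=
    (Fin.val_injective.comp r.injective).ne
  suffices ∀ {a c : C}, a ≠ y → a ≠ c → (movedPos r y p a : ℕ) ≠ movedPos r y p c by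
    intro a c h
    by_contra hac
    rcases eq_or_ne a y with rfl | hay
    · exact this (Ne.symm hac) (Ne.symm hac) (congrArg Fin.val h).symm
    · exact this hay hac (congrArg Fin.val h)
  intro a c hay hac
  have := hval hay
  rw [movedPos_val_of_ne r y p hay]
  rcases eq_or_ne c y with rfl | hcy
  · simp only [movedPos, if_pos]
    split_ifs <;> omega
  · have := hval hac
    have := hval hcy
    rw [movedPos_val_of_ne r y p hcy]
    split_ifs <;> omega

/-- The ranking `r` with `y` removed and reinserted at position `p`. -/
noncomputable def moveTo : Ranking C :=
  Equiv.ofBijective (movedPos r y p)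
    ((Fintype.bijective_iff_injective_and_card _).mpr ⟨movedPos_injective r y p, by simp⟩)

end Move

section MoveBelow

variable {r : Ranking C} {x y : C}

lemma moveTo_apply_val_of_ne (hyx : Before r y x) {z : C} (hz : z ≠ y) :
    (moveTo r y (r x) z : ℕ) =
      if (r y : ℕ) < r z ∧ (r z : ℕ) ≤ r x then (r z : ℕ) - 1 else r z := by
  have : ¬ ((r x : ℕ) ≤ r z ∧ (r z : ℕ) < r y) := fun h => by
    have : (r y : ℕ) < r x := hyx
    omega
  simp only [moveTo, Equiv.ofBijective_apply, movedPos_val_of_ne r y _ hz, if_neg this]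

lemma moveTo_apply_self : moveTo r y (r x) y = r x := by
  simp [moveTo, movedPos]

lemma before_moveTo_iff_of_ne (hyx : Before r y x) {a c : C} (ha : a ≠ y) (hc : c ≠ y) :
    Before (moveTo r y (r x)) a c ↔ Before r a c := by
  have : (r a : ℕ) ≠ r y := (Fin.val_injective.comp r.injective).ne ha
  have : (r c : ℕ) ≠ r y := (Fin.val_injective.comp r.injective).ne hc
  have : (r y : ℕ) < r x := hyx
  simp only [Before, Fin.lt_def, moveTo_apply_val_of_ne hyx ha, moveTo_apply_val_of_ne hyx hc]
  split_ifs <;> omega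

lemma before_moveTo_self_right_iff (hyx : Before r y x) {z : C} (hz : z ≠ y) :
    Before (moveTo r y (r x)) z y ↔ ¬ Before r x z := by
  have : (r z : ℕ) ≠ r y := (Fin.val_injective.comp r.injective).ne hz
  have : (r y : ℕ) < r x := hyx
  simp only [Before, Fin.lt_def, not_lt, moveTo_apply_val_of_ne hyx hz, moveTo_apply_self]
  split_ifs <;> omega

lemma before_moveTo_self_left_iff (hyx : Before r y x) {z : C} (hz : z ≠ y) :
    Before (moveTo r y (r x)) y z ↔ Before r x z := by
  have : (r z : ℕ) ≠ r y := (Fin.val_injective.comp r.injective).ne hz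
  have : (r y : ℕ) < r x := hyx
  simp only [Before, Fin.lt_def, moveTo_apply_val_of_ne hyx hz, moveTo_apply_self]
  split_ifs <;> omega

lemma topS_moveTo_eq_of_before (hyx : Before r y x) {S : Finset C} {u : C} (hu : u ∈ S)
    (huy : u ≠ y) (hxu : ¬ Before r x u)
    (hmin : ∀ z ∈ S, z ≠ y → z ≠ u → Before r u z) :
    topS (moveTo r y (r x)) S = u := by
  refine topS_eq_iff.mpr ⟨hu, fun z hz hzu => ?_⟩
  rcases eq_or_ne z y with rfl | hzy
  · exact (before_moveTo_self_right_iff hyx huy).mpr hxu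
  · exact (before_moveTo_iff_of_ne hyx huy hzy).mpr (hmin z hz hzy hzu)

lemma topS_moveTo_eq (hyx : Before r y x) {S : Finset C}
    (hS : topS r S = y → ∀ z ∈ S, z ≠ y → Before r x z) :
    topS (moveTo r y (r x)) S = topS r S := by
  rcases S.eq_empty_or_nonempty with rfl | hne
  · rfl
  obtain ⟨m, hm, hmin⟩ := S.exists_min_image r hne
  have htop : topS r S = m := topS_eq_of_forall_le hm hmin
  rw [htop]
  refine topS_eq_of_before_imp htop fun z hz hzm hmz => ?_
  rcases eq_or_ne m y with rfl | hmy
  · exact (before_moveTo_self_left_iff hyx hzm).mpr (hS htop z hz hzm)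
  rcases eq_or_ne z y with rfl | hzy
  · exact (before_moveTo_self_right_iff hyx hmy).mpr fun hxm => lt_asymm (hmz.trans hyx) hxm
  · exact (before_moveTo_iff_of_ne hyx hmy hzy).mpr hmz

end MoveBelow

def improvement (V : Multiset (Ranking C)) (π π' : Ranking C) (S : Finset C) : ℤ :=
  disagreements V π S - disagreements V π' S

lemma kDistV_sub_kDistV (k : ℕ) (V : Multiset (Ranking C)) (π π' : Ranking C) :
    (kDistV k π V : ℤ) - kDistV k π' V =
      ∑ S ∈ univ.powerset.filter (·.card ≤ k), improvement V π π' S := by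
  simp only [kDistV_eq_sum_disagreements, improvement, sum_sub_distrib, Nat.cast_sum]

section Improvement

variable (V : Multiset (Ranking C)) {π π' : Ranking C} {S : Finset C}

lemma improvement_eq {a b : C} (ha : topS π S = a) (hb : topS π' S = b) :
    improvement V π π' S = votesTop V S b - votesTop V S a := by
  rw [improvement, disagreements_eq V ha, disagreements_eq V hb,
    Nat.cast_sub (votesTop_le_card V S a), Nat.cast_sub (votesTop_le_card V S b)]
  ring

lemma improvement_eq_zero (h : topS π' S = topS π S) : improvement V π π' S = 0 := by
  simp [improvement, disagreements, h]

lemma neg_votesTop_le_improvement {a : C} (ha : topS π S = a) :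
    -(votesTop V S a : ℤ) ≤ improvement V π π' S := by
  have : disagreements V π' S ≤ Multiset.card V :=
    Multiset.card_le_card (Multiset.filter_le _ V)
  have := votesTop_le_card V S a
  rw [improvement, disagreements_eq V ha]
  omega

end Improvement

lemma topS_insert_eq {π : Ranking C} {S : Finset C} {y : C} (h : ∀ z ∈ S, Before π y z) :
    topS π (insert y S) = y :=
  topS_eq_iff.mpr ⟨mem_insert_self y S, fun z hz hzy =>
    h z ((mem_insert.mp hz).resolve_left hzy)⟩

section Shapes

variable (V : Multiset (Ranking C)) {r : Ranking C} {x y u e : C}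

lemma four_mul_card_le_improvement_pair (hyx : Before r y x)
    (hxy : AtLeastRatio V (5 / 6) x y) :
    4 * (Multiset.card V : ℤ) ≤ 6 * improvement V r (moveTo r y (r x)) {y, x} := by
  have hxy' : x ≠ y := hyx.ne.symm
  rw [improvement_eq V (topS_insert_eq (by simpa using hyx))
    (topS_moveTo_eq_of_before hyx (by simp) hxy' (lt_irrefl _) (by simp))]
  have := votesTop_le_votesBefore V (S := {y, x}) (by simp) hxy'
  have := votesBefore_le_votesTop V (S := {y, x}) (a := x) (b := y) (by simp) (by simp [pair_comm])
  have := votesBefore_add_votesBefore_swap V hxy'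
  have := hxy.five_mul_card_le
  omega

lemma two_mul_card_le_improvement_pair (hyu : Before r y u) (hux : Before r u x)
    (hxy : AtLeastRatio V (5 / 6) x y) (hux' : AtLeastRatio V (5 / 6) u x) :
    2 * (Multiset.card V : ℤ) ≤ 6 * improvement V r (moveTo r y (r x)) {y, u} := by
  have huy : u ≠ y := hyu.ne.symm
  rw [improvement_eq V (topS_insert_eq (by simpa using hyu))
    (topS_moveTo_eq_of_before (hyu.trans hux) (by simp) huy (lt_asymm hux) (by simp))]
  have := votesTop_le_votesBefore V (S := {y, u}) (by simp) huy
  have := votesBefore_le_votesTop V (S := {y, u}) (a := u) (b := y) (by simp) (by simp [pair_comm])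
  have := votesBefore_add_votesBefore_swap V huy
  have := three_mul_votesBefore_le_card hxy hux' huy
  omega

lemma two_mul_card_le_improvement_triple (hyu : Before r y u) (hux : Before r u x)
    (hxy : AtLeastRatio V (5 / 6) x y) (hux' : AtLeastRatio V (5 / 6) u x) :
    2 * (Multiset.card V : ℤ) ≤ 6 * improvement V r (moveTo r y (r x)) {y, x, u} := by
  have huy : u ≠ y := hyu.ne.symm
  have hyx : Before r y x := hyu.trans hux
  rw [improvement_eq V (topS_insert_eq (by simp [hyx, hyu]))
    (topS_moveTo_eq_of_before hyx (by simp) huy (lt_asymm hux) (by simp [hux]))]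
  have := votesTop_le_votesBefore V (S := {y, x, u}) (c := y) (d := x) (by simp)
    hyx.ne.symm
  have := votesBefore_add_votesBefore_le_votesTop V (S := {y, x, u}) (a := u) (b := y) (c := x)
    (by simp) (by intro z; simp; tauto)
  have := votesBefore_add_votesBefore_swap V huy
  have := three_mul_votesBefore_le_card hxy hux' huy
  have := hxy.five_mul_card_le
  have := hux'.five_mul_card_le
  have := votesBefore_add_votesBefore_swap V (hyx.ne.symm : x ≠ y)
  omega

lemma three_mul_card_le_improvement_triple (hyx : Before r y x) (hxe : Before r x e)
    (hxy : AtLeastRatio V (5 / 6) x y) (hxe' : AtLeastRatio V (5 / 6) x e) :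
    3 * (Multiset.card V : ℤ) ≤ 6 * improvement V r (moveTo r y (r x)) {y, x, e} := by
  have hxy' : x ≠ y := hyx.ne.symm
  rw [improvement_eq V (topS_insert_eq (by simp [hyx, (hyx.trans hxe : Before r y e)]))
    (topS_moveTo_eq_of_before hyx (by simp) hxy' (lt_irrefl _) (by simp [hxe]))]
  have := votesTop_le_votesBefore V (S := {y, x, e}) (c := y) (d := x) (by simp) hxy'
  have := votesBefore_add_votesBefore_le_votesTop V (S := {y, x, e}) (a := x) (b := y) (c := e)
    (by simp) (by intro z; simp; tauto)
  have := votesBefore_add_votesBefore_swap V hxy'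
  have := hxy.five_mul_card_le
  have := hxe'.five_mul_card_le
  omega

lemma improvement_triple_nonneg (hyu : Before r y u) (hux : Before r u x) (hxe : Before r x e)
    (hxy : AtLeastRatio V (5 / 6) x y) (hux' : AtLeastRatio V (5 / 6) u x)
    (hxe' : AtLeastRatio V (5 / 6) x e) :
    0 ≤ improvement V r (moveTo r y (r x)) {y, u, e} := by
  have huy : u ≠ y := hyu.ne.symm
  have hue : Before r u e := hux.trans hxe
  rw [improvement_eq V (topS_insert_eq (by simp [hyu, (hyu.trans hue : Before r y e)]))
    (topS_moveTo_eq_of_before (hyu.trans hux) (by simp) huy (lt_asymm hux) (by simp [hue]))]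
  have := votesTop_le_votesBefore V (S := {y, u, e}) (c := y) (d := u) (by simp) huy
  have := votesBefore_add_votesBefore_le_votesTop V (S := {y, u, e}) (a := u) (b := y) (c := e)
    (by simp) (by intro z; simp; tauto)
  have := votesBefore_add_votesBefore_swap V huy
  have := three_mul_votesBefore_le_card hxy hux' huy
  have := votesBefore_add_votesBefore_le V u x e
  have := hux'.five_mul_card_le
  have := hxe'.five_mul_card_le
  omega

lemma neg_two_mul_card_le_improvement {π π' : Ranking C} {S : Finset C} (htop : topS π S = y)
    (hu : u ∈ S) (huy : u ≠ y) (hxy : AtLeastRatio V (5 / 6) x y)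
    (hux : AtLeastRatio V (5 / 6) u x) :
    -2 * (Multiset.card V : ℤ) ≤ 6 * improvement V π π' S := by
  have := neg_votesTop_le_improvement V (π' := π') htop
  have := votesTop_le_votesBefore V hu huy
  have := three_mul_votesBefore_le_card hxy hux huy
  omega

end Shapes

section MoveBelowDistance

variable (V : Multiset (Ranking C)) {r : Ranking C} {x y : C}

lemma sum_improvement_moveTo_eq (hyx : Before r y x) :
    ∑ S ∈ univ.powerset.filter (·.card ≤ 3), improvement V r (moveTo r y (r x)) S =
      ∑ T ∈ (below r y).powersetCard 1, improvement V r (moveTo r y (r x)) (insert y T) +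
      ∑ T ∈ (below r y).powersetCard 2, improvement V r (moveTo r y (r x)) (insert y T) := by
  set F := (below r y).powersetCard 1 ∪ (below r y).powersetCard 2
  have hF : ∀ {T}, T ∈ F ↔ T ⊆ below r y ∧ (T.card = 1 ∨ T.card = 2) := by
    simp [F, mem_powersetCard, and_or_left]
  have hy : ∀ T ∈ F, y ∉ T := fun T hT hyT => notMem_below_self ((hF.mp hT).1 hyT)
  rw [← sum_union (pairwise_disjoint_powersetCard _ (by decide : (1 : ℕ) ≠ 2)),
    ← sum_image (s := F) (g := insert y) fun T hT T' hT' h => by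
      rw [← erase_insert (hy T hT), ← erase_insert (hy T' hT'), h]]
  symm
  refine sum_subset (fun S hS => ?_) fun S hS hSF => improvement_eq_zero V ?_
  · obtain ⟨T, hT, rfl⟩ := mem_image.mp hS
    have := card_insert_le y T
    have := (hF.mp hT).2
    simp only [mem_filter, mem_powerset, subset_univ, true_and]
    omega
  -- a set whose top moves has `y` on top and one or two further elements, all below `y`
  refine topS_moveTo_eq hyx fun htop z hz hzy => ?_
  by_contra hxz
  obtain ⟨hyS, hmin⟩ := topS_eq_iff.mp htop
  refine hSF (mem_image.mpr ⟨S.erase y, hF.mpr ⟨fun w hw => ?_, ?_⟩, insert_erase hyS⟩)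
  · obtain ⟨hwy, hwS⟩ := mem_erase.mp hw
    simpa [below] using hmin w hwS hwy
  · have := card_erase_of_mem hyS
    have := card_pos.mpr ⟨z, mem_erase.mpr ⟨hzy, hz⟩⟩
    have := (mem_filter.mp hS).2
    omega

lemma improvement_insert_nonneg (hyx : Before r y x) (hxy : AtLeastRatio V (5 / 6) x y)
    (hK : ∀ u ∈ between r y x, AtLeastRatio V (5 / 6) u x)
    (hB : ∀ e ∈ below r x, AtLeastRatio V (5 / 6) x e) {T : Finset C}
    (hT : T ⊆ between r y x ∪ below r x) (hcard : T.card = 2) (hTK : ¬ T ⊆ between r y x) :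
    0 ≤ improvement V r (moveTo r y (r x)) (insert y T) := by
  obtain ⟨e, heT, heK⟩ := not_subset.mp hTK
  have heB : e ∈ below r x := (mem_union.mp (hT heT)).resolve_left heK
  by_cases hu : ∃ u ∈ T, u ∈ between r y x
  · obtain ⟨u, huT, huK⟩ := hu
    have hTeq : T = {u, e} := (eq_of_subset_of_card_le (insert_subset huT (by simpa using heT))
      (by rw [hcard, card_pair (ne_of_mem_of_not_mem huK heK)])).symm
    obtain ⟨hyu, hux⟩ := (mem_filter.mp huK).2
    rw [hTeq]
    exact improvement_triple_nonneg V hyu hux (mem_filter.mp heB).2 hxy (hK u huK) (hB e heB)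
  · simp only [not_exists, not_and] at hu
    refine (improvement_eq_zero V (topS_moveTo_eq hyx fun _ z hz hzy => ?_)).ge
    have hzT := (mem_insert.mp hz).resolve_left hzy
    exact (mem_filter.mp ((mem_union.mp (hT hzT)).resolve_left (hu z hzT))).2

lemma six_mul_sum_improvement_singletons (hyx : Before r y x) (hxy : AtLeastRatio V (5 / 6) x y)
    (hK : ∀ u ∈ between r y x, AtLeastRatio V (5 / 6) u x) :
    (4 + 2 * (between r y x).card) * (Multiset.card V : ℤ) ≤
      6 * ∑ T ∈ (below r y).powersetCard 1,
        improvement V r (moveTo r y (r x)) (insert y T) := by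
  have hbelow : ∑ e ∈ below r x, improvement V r (moveTo r y (r x)) {y, e} = 0 :=
    sum_eq_zero fun e he => improvement_eq_zero V <| topS_moveTo_eq hyx fun _ z hz hzy => by
      rw [mem_singleton.mp ((mem_insert.mp hz).resolve_left hzy)]
      exact (mem_filter.mp he).2
  have hbetween : (between r y x).card • (2 * (Multiset.card V : ℤ)) ≤
      ∑ u ∈ between r y x, 6 * improvement V r (moveTo r y (r x)) {y, u} :=
    card_nsmul_le_sum _ _ _ fun u hu =>
      two_mul_card_le_improvement_pair V (mem_filter.mp hu).2.1 (mem_filter.mp hu).2.2 hxy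
        (hK u hu)
  have hpair := four_mul_card_le_improvement_pair V hyx hxy
  rw [powersetCard_one, sum_map, below_eq_insert hyx, sum_insert notMem_between_union_below,
    sum_union disjoint_between_below]
  simp only [Function.Embedding.coeFn_mk]
  rw [hbelow]
  rw [← mul_sum, nsmul_eq_mul] at hbetween
  linarith

lemma six_mul_sum_improvement_pairs (hyx : Before r y x) (hxy : AtLeastRatio V (5 / 6) x y)
    (hK : ∀ u ∈ between r y x, AtLeastRatio V (5 / 6) u x)
    (hB : ∀ e ∈ below r x, AtLeastRatio V (5 / 6) x e) :
    (2 * (between r y x).card + 3 * (below r x).card - 2 * (between r y x).card.choose 2) *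
        (Multiset.card V : ℤ) ≤
      6 * ∑ T ∈ (below r y).powersetCard 2,
        improvement V r (moveTo r y (r x)) (insert y T) := by
  set K := between r y x
  set B := below r x
  set f := fun T => improvement V r (moveTo r y (r x)) (insert y T)
  have hx := notMem_between_union_below (r := r) (x := x) (y := y)
  have hxT : ∀ T ∈ (K ∪ B).powersetCard 1, x ∉ T := fun T hT hxT =>
    hx ((mem_powersetCard.mp hT).1 hxT)
  have hwithin : ∑ T ∈ K.powersetCard 2, f T ≤ ∑ T ∈ (K ∪ B).powersetCard 2, f T :=
    sum_le_sum_of_subset_of_nonneg (powersetCard_mono subset_union_left) fun T hT hTK => by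
      obtain ⟨hT, hcard⟩ := mem_powersetCard.mp hT
      exact improvement_insert_nonneg V hyx hxy hK hB hT hcard
        fun h => hTK (mem_powersetCard.mpr ⟨h, hcard⟩)
  have hneg : (K.powersetCard 2).card • (-2 * (Multiset.card V : ℤ)) ≤
      ∑ T ∈ K.powersetCard 2, 6 * f T :=
    card_nsmul_le_sum _ _ _ fun T hT => by
      obtain ⟨hTK, hcard⟩ := mem_powersetCard.mp hT
      obtain ⟨u, hu⟩ := card_pos.mp (by omega : 0 < T.card)
      exact neg_two_mul_card_le_improvement V
        (topS_insert_eq fun z hz => (mem_filter.mp (hTK hz)).2.1)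
        (mem_insert_of_mem hu) (mem_filter.mp (hTK hu)).2.1.ne.symm hxy (hK u (hTK hu))
  have hbetween : K.card • (2 * (Multiset.card V : ℤ)) ≤
      ∑ u ∈ K, 6 * improvement V r (moveTo r y (r x)) {y, x, u} :=
    card_nsmul_le_sum _ _ _ fun u hu =>
      two_mul_card_le_improvement_triple V (mem_filter.mp hu).2.1 (mem_filter.mp hu).2.2 hxy
        (hK u hu)
  have hbelow : B.card • (3 * (Multiset.card V : ℤ)) ≤
      ∑ e ∈ B, 6 * improvement V r (moveTo r y (r x)) {y, x, e} :=
    card_nsmul_le_sum _ _ _ fun e he =>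
      three_mul_card_le_improvement_triple V hyx (mem_filter.mp he).2 hxy (hB e he)
  rw [below_eq_insert hyx, powersetCard_succ_insert hx,
    sum_union (disjoint_left.mpr fun T hT hT' => by
      obtain ⟨T', -, rfl⟩ := mem_image.mp hT'
      exact hx ((mem_powersetCard.mp hT).1 (mem_insert_self x T'))),
    sum_image fun T hT T' hT' h => by
      rw [← erase_insert (hxT T hT), ← erase_insert (hxT T' hT'), h],
    powersetCard_one, sum_map, sum_union disjoint_between_below]
  simp only [Function.Embedding.coeFn_mk]
  rw [← mul_sum, card_powersetCard, nsmul_eq_mul] at hneg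
  rw [← mul_sum, nsmul_eq_mul] at hbetween hbelow
  linarith

lemma card_between_add_card_below_add_two_le (hyx : Before r y x) :
    (between r y x).card + (below r x).card + 2 ≤ Fintype.card C := by
  have h := card_le_univ (insert y (below r y))
  rw [card_insert_of_notMem notMem_below_self, below_eq_insert hyx,
    card_insert_of_notMem notMem_between_union_below,
    card_union_of_disjoint disjoint_between_below] at h
  omega

theorem six_mul_kDistV_sub_kDistV_moveTo (hyx : Before r y x)
    (hxy : AtLeastRatio V (5 / 6) x y) (hK : ∀ u ∈ between r y x, AtLeastRatio V (5 / 6) u x)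
    (hB : ∀ e ∈ below r x, AtLeastRatio V (5 / 6) x e) :
    (4 + 4 * (between r y x).card + 3 * (below r x).card - 2 * (between r y x).card.choose 2) *
        (Multiset.card V : ℤ) ≤
      6 * ((kDistV 3 r V : ℤ) - kDistV 3 (moveTo r y (r x)) V) := by
  rw [kDistV_sub_kDistV, sum_improvement_moveTo_eq V hyx]
  linarith [six_mul_sum_improvement_singletons V hyx hxy hK,
    six_mul_sum_improvement_pairs V hyx hxy hK hB]

end MoveBelowDistance

lemma two_mul_choose_two_lt {n b k β : ℕ}
    (hbn : ((n : ℤ) - b - 2) * ((n : ℤ) - b - 6) ≤ 3 * b)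
    (hk : k + β + 2 ≤ n) (hb : b ≤ β) : 2 * (k.choose 2 : ℤ) < 4 + 4 * k + 3 * β := by
  have hchoose : 2 * (k.choose 2 : ℚ) = k * (k - 1) := by
    rw [Nat.cast_choose_two]
    ring
  have hchoose' : 2 * (k.choose 2 : ℤ) = k * (k - 1) := by exact_mod_cast hchoose
  rw [hchoose']
  have hk' : (k : ℤ) ≤ n - β - 2 := by omega
  -- for `k > 5`: `k (k - 5) ≤ (n - β - 2) (n - β - 6) ≤ (n - b - 2) (n - b - 6) ≤ 3 b`
  rcases le_or_gt k 5 with h | h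
  · nlinarith
  · nlinarith [mul_le_mul_of_nonneg_left hk' (by omega : (0 : ℤ) ≤ k - 4),
      mul_le_mul_of_nonneg_right hk' (by omega : (0 : ℤ) ≤ n - β - 6)]

end

theorem stmt19_general {C : Type*} [Fintype C] [DecidableEq C]
    (b n : ℕ)
    (hbn : ((n : ℤ) - b - 2) * ((n : ℤ) - b - 6) ≤ 3 * b)
    (hC : Fintype.card C ≤ n)
    (V : Multiset (Ranking C)) (hV : V ≠ 0)
    (x : C) (hx : NonDirty V (5 / 6) x)
    (r : Ranking C) (hr : IsKMedian 3 V r)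
    (hB : b ≤ (Finset.univ.filter (fun z : C => Before r x z)).card)
    (hA : ∀ z : C, AtLeastRatio V (5 / 6) z x → Before r z x) :
    ∀ y : C, y ≠ x → AtLeastRatio V (5 / 6) x y → Before r x y := by
  intro y₀ hy₀ hxy₀
  by_contra hx₀
  obtain ⟨y, hy, hlast⟩ := (univ.filter fun z => Before r z x ∧ AtLeastRatio V (5 / 6) x z)
    |>.exists_max_image r
      ⟨y₀, mem_filter.mpr ⟨mem_univ _, before_of_not_before hy₀.symm hx₀, hxy₀⟩⟩
  obtain ⟨hyx, hxy⟩ := (mem_filter.mp hy).2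
  have hK : ∀ u ∈ between r y x, AtLeastRatio V (5 / 6) u x := fun u hu => by
    obtain ⟨hyu, hux⟩ := (mem_filter.mp hu).2
    refine (hx u hux.ne).resolve_left fun hxu => ?_
    exact absurd (hlast u (mem_filter.mpr ⟨mem_univ _, hux, hxu⟩)) (not_le.mpr hyu)
  have hB' : ∀ e ∈ below r x, AtLeastRatio V (5 / 6) x e := fun e he =>
    (hx e (mem_filter.mp he).2.ne.symm).resolve_right fun hex =>
      lt_asymm (hA e hex) (mem_filter.mp he).2
  have hgain := six_mul_kDistV_sub_kDistV_moveTo V hyx hxy hK hB'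
  have hmedian : (kDistV 3 r V : ℤ) ≤ kDistV 3 (moveTo r y (r x)) V := by exact_mod_cast hr _
  have hsize := two_mul_choose_two_lt hbn
    ((card_between_add_card_below_add_two_le hyx).trans hC) hB
  have hM : (0 : ℤ) < Multiset.card V := by exact_mod_cast Multiset.card_pos.mpr hV
  linarith [mul_pos (sub_pos.mpr hsize) hM]

/-- $5/6$-majority rule under a size condition on `B`. -/
theorem stmt19 {C : Type*} [Fintype C] [DecidableEq C]
    (b n : ℕ) (hn3 : 3 ≤ n)
    (hbn : ((n : ℤ) - b - 2) * ((n : ℤ) - b - 6) ≤ 3 * b)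
    (hC : Fintype.card C ≤ n)
    (V : Multiset (Ranking C)) (hV : V ≠ 0)
    (x : C) (hx : NonDirty V (5 / 6) x)
    (r : Ranking C) (hr : IsKMedian 3 V r)
    (hB : b ≤ (Finset.univ.filter (fun z : C => Before r x z)).card)
    (hA : ∀ z : C, AtLeastRatio V (5 / 6) z x → Before r z x) :
    ∀ y : C, y ≠ x → AtLeastRatio V (5 / 6) x y → Before r x y :=
  stmt19_general b n hbn hC V hV x hx r hr hB hA
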